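/- Let M be a finite MDP with reward R and let M' have reward R'(s,a,s') = R(s,a,s') + γΦ(s') − Φ(s) for some Φ : S → ℝ. Then for every policy π, state s and action a, the action-value functions satisfy Q'_π(s,a) = Q_π(s,a) − Φ(s); consequently for each state s, argmax_a Q'_*(s,a) = argmax_a Q_*(s,a), so every optimal policy of M' is optimal in M. -/
import Mathlib

open Finset

lemma wavg_abs_le {ι : Type*} [Fintype ι] (w f : ι → ℝ) (hw : ∀ i, 0 ≤ w i)
    (h1 : ∑ i, w i = 1) {M : ℝ} (hf : ∀ i, |f i| ≤ M) :
    |∑ i, w i * f i| ≤ M := by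
  calc |∑ i, w i * f i| ≤ ∑ i, |w i * f i| := Finset.abs_sum_le_sum_abs _ _
    _ = ∑ i, w i * |f i| := by
        refine Finset.sum_congr rfl fun i _ => ?_
        rw [abs_mul, abs_of_nonneg (hw i)]
    _ ≤ ∑ i, w i * M := Finset.sum_le_sum fun i _ => mul_le_mul_of_nonneg_left (hf i) (hw i)
    _ = M := by rw [← Finset.sum_mul, h1, one_mul]

lemma abs_sup'_sub_le {A : Type*} [Fintype A] [Nonempty A] (f g : A → ℝ) {M : ℝ}
    (h : ∀ a, |f a - g a| ≤ M) :
    |Finset.univ.sup' Finset.univ_nonempty f - Finset.univ.sup' Finset.univ_nonempty g| ≤ M := by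
  have h1 : ∀ a, f a - g a ≤ M := fun a => (abs_le.mp (h a)).2
  have h2 : ∀ a, g a - f a ≤ M := fun a => by
    have := (abs_le.mp (h a)).1; linarith
  rw [abs_le]
  constructor
  · have : Finset.univ.sup' Finset.univ_nonempty g ≤ Finset.univ.sup' Finset.univ_nonempty f + M := by
      apply Finset.sup'_le
      intro a _
      have := Finset.le_sup' f (Finset.mem_univ a)
      have := h2 a; linarith
    linarith
  · have : Finset.univ.sup' Finset.univ_nonempty f ≤ Finset.univ.sup' Finset.univ_nonempty g + M := by
      apply Finset.sup'_le
      intro a _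
      have := Finset.le_sup' g (Finset.mem_univ a)
      have := h1 a; linarith
    linarith

lemma sup'_sub_const {A : Type*} [Fintype A] [Nonempty A] (f : A → ℝ) (c : ℝ) :
    Finset.univ.sup' Finset.univ_nonempty (fun a => f a - c)
      = Finset.univ.sup' Finset.univ_nonempty f - c := by
  apply le_antisymm
  · apply Finset.sup'_le
    intro a _
    have := Finset.le_sup' f (Finset.mem_univ a); linarith
  · rw [sub_le_iff_le_add]
    apply Finset.sup'_le
    intro a _
    have := Finset.le_sup' (fun a => f a - c) (Finset.mem_univ a)
    linarith

lemma fixpoint_zero {S A : Type*} [Fintype S] [Fintype A] [Nonempty S] [Nonempty A]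
    (γ : ℝ) (hγ1 : γ < 1) (D : S → A → ℝ)
    (h : ∀ s a, |D s a| ≤ γ *
      (Finset.univ.sup' Finset.univ_nonempty (fun p : S × A => |D p.1 p.2|))) :
    ∀ s a, D s a = 0 := by
  set M := Finset.univ.sup' Finset.univ_nonempty (fun p : S × A => |D p.1 p.2|) with hM
  obtain ⟨s₀⟩ := ‹Nonempty S›
  obtain ⟨a₀⟩ := ‹Nonempty A›
  have hM0 : 0 ≤ M :=
    le_trans (abs_nonneg _) (Finset.le_sup' (fun p : S × A => |D p.1 p.2|) (Finset.mem_univ (s₀, a₀)))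
  have hMle : M ≤ γ * M := by
    rw [hM]
    apply Finset.sup'_le
    intro p _
    exact h p.1 p.2
  have hMz : M ≤ 0 := by nlinarith
  intro s a
  have := le_trans (Finset.le_sup' (fun p : S × A => |D p.1 p.2|) (Finset.mem_univ (s, a))) hMz
  exact abs_nonpos_iff.mp this

/-- Ng–Harada–Russell policy invariance for potential-based reward shaping in a
finite MDP: if `Q` (resp. `Q'`) solves the policy-evaluation Bellman equations
for reward `R` (resp. the shaped reward `R'(s,a,s') = R(s,a,s') + γΦ(s') - Φ(s)`),
then `Q'(s,a) = Q(s,a) - Φ(s)`; and if `Qs`, `Qs'` solve the corresponding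
Bellman optimality equations, the greedy (argmax) action sets coincide in every
state, so every optimal policy of the shaped MDP is optimal in the original one. -/
theorem potential_shaping_policy_invariance
    {S A : Type*} [Fintype S] [Fintype A] [Nonempty A]
    (P : S → A → S → ℝ) (hP0 : ∀ s a s', 0 ≤ P s a s')
    (hP1 : ∀ s a, ∑ s', P s a s' = 1)
    (γ : ℝ) (hγ0 : 0 ≤ γ) (hγ1 : γ < 1)
    (R : S → A → S → ℝ) (Φ : S → ℝ)
    (π : S → A → ℝ) (hπ0 : ∀ s a, 0 ≤ π s a) (hπ1 : ∀ s, ∑ a, π s a = 1)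
    (Q Q' : S → A → ℝ)
    (hQ : ∀ s a, Q s a = ∑ s', P s a s' * (R s a s' + γ * ∑ a', π s' a' * Q s' a'))
    (hQ' : ∀ s a, Q' s a = ∑ s', P s a s' *
      ((R s a s' + γ * Φ s' - Φ s) + γ * ∑ a', π s' a' * Q' s' a'))
    (Qs Qs' : S → A → ℝ)
    (hQs : ∀ s a, Qs s a = ∑ s', P s a s' *
      (R s a s' + γ * Finset.univ.sup' Finset.univ_nonempty (fun a' => Qs s' a')))
    (hQs' : ∀ s a, Qs' s a = ∑ s', P s a s' *
      ((R s a s' + γ * Φ s' - Φ s) +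
        γ * Finset.univ.sup' Finset.univ_nonempty (fun a' => Qs' s' a'))) :
    (∀ s a, Q' s a = Q s a - Φ s) ∧
    (∀ s : S, {a : A | ∀ b, Qs' s b ≤ Qs' s a} = {a : A | ∀ b, Qs s b ≤ Qs s a}) := by
  rcases isEmpty_or_nonempty S with hS | hS
  · exact ⟨fun s => isEmptyElim s, fun s => isEmptyElim s⟩
  -- Part 1: policy evaluation
  have hΦsum : ∀ s a, Φ s = ∑ s', P s a s' * Φ s := by
    intro s a; rw [← Finset.sum_mul, hP1, one_mul]
  have hD : ∀ s a, Q' s a - Q s a + Φ s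
      = γ * ∑ s', P s a s' * (∑ a', π s' a' * (Q' s' a' - Q s' a' + Φ s')) := by
    intro s a
    have hpt : ∀ s' : S,
        P s a s' * ((R s a s' + γ * Φ s' - Φ s) + γ * ∑ a', π s' a' * Q' s' a')
        = P s a s' * (R s a s' + γ * ∑ a', π s' a' * Q s' a')
          - P s a s' * Φ s
          + γ * (P s a s' * (∑ a', π s' a' * (Q' s' a' - Q s' a' + Φ s'))) := by
      intro s'
      have hinner : ∑ a', π s' a' * (Q' s' a' - Q s' a' + Φ s')
          = (∑ a', π s' a' * Q' s' a') - (∑ a', π s' a' * Q s' a') + Φ s' := by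
        have : ∀ a', π s' a' * (Q' s' a' - Q s' a' + Φ s')
            = π s' a' * Q' s' a' - π s' a' * Q s' a' + π s' a' * Φ s' := fun a' => by ring
        rw [Finset.sum_congr rfl fun a' _ => this a', Finset.sum_add_distrib,
          Finset.sum_sub_distrib, ← Finset.sum_mul, hπ1, one_mul]
      rw [hinner]; ring
    rw [hQ' s a, hQ s a, Finset.sum_congr rfl fun s' _ => hpt s',
      Finset.sum_add_distrib, Finset.sum_sub_distrib, ← Finset.mul_sum, ← hΦsum s a]
    ring
  have hDzero : ∀ s a, Q' s a - Q s a + Φ s = 0 := by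
    apply fixpoint_zero γ hγ1 (fun s a => Q' s a - Q s a + Φ s)
    intro s a
    set M := Finset.univ.sup' Finset.univ_nonempty
      (fun p : S × A => |Q' p.1 p.2 - Q p.1 p.2 + Φ p.1|) with hM
    rw [hD s a, abs_mul, abs_of_nonneg hγ0]
    apply mul_le_mul_of_nonneg_left ?_ hγ0
    apply wavg_abs_le (P s a) _ (hP0 s a) (hP1 s a)
    intro s'
    apply wavg_abs_le (π s') _ (hπ0 s') (hπ1 s')
    intro a'
    exact Finset.le_sup' (fun p : S × A => |Q' p.1 p.2 - Q p.1 p.2 + Φ p.1|)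
      (Finset.mem_univ (s', a'))
  -- Part 2: optimality
  have hE : ∀ s a, Qs' s a - Qs s a + Φ s
      = γ * ∑ s', P s a s' *
        ((Finset.univ.sup' Finset.univ_nonempty fun a' => Qs' s' a')
          - (Finset.univ.sup' Finset.univ_nonempty fun a' => Qs s' a') + Φ s') := by
    intro s a
    have hpt : ∀ s' : S,
        P s a s' * ((R s a s' + γ * Φ s' - Φ s)
            + γ * Finset.univ.sup' Finset.univ_nonempty (fun a' => Qs' s' a'))
        = P s a s' * (R s a s' + γ * Finset.univ.sup' Finset.univ_nonempty (fun a' => Qs s' a'))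
          - P s a s' * Φ s
          + γ * (P s a s' *
            ((Finset.univ.sup' Finset.univ_nonempty fun a' => Qs' s' a')
              - (Finset.univ.sup' Finset.univ_nonempty fun a' => Qs s' a') + Φ s')) :=
      fun s' => by ring
    rw [hQs' s a, hQs s a, Finset.sum_congr rfl fun s' _ => hpt s',
      Finset.sum_add_distrib, Finset.sum_sub_distrib, ← Finset.mul_sum, ← hΦsum s a]
    ring
  have hEzero : ∀ s a, Qs' s a - Qs s a + Φ s = 0 := by
    apply fixpoint_zero γ hγ1 (fun s a => Qs' s a - Qs s a + Φ s)
    intro s a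
    set M := Finset.univ.sup' Finset.univ_nonempty
      (fun p : S × A => |Qs' p.1 p.2 - Qs p.1 p.2 + Φ p.1|) with hM
    rw [hE s a, abs_mul, abs_of_nonneg hγ0]
    apply mul_le_mul_of_nonneg_left ?_ hγ0
    apply wavg_abs_le (P s a) _ (hP0 s a) (hP1 s a)
    intro s'
    have key : (Finset.univ.sup' Finset.univ_nonempty fun a' => Qs' s' a')
        - (Finset.univ.sup' Finset.univ_nonempty fun a' => Qs s' a') + Φ s'
        = (Finset.univ.sup' Finset.univ_nonempty fun a' => Qs' s' a')
          - (Finset.univ.sup' Finset.univ_nonempty fun a' => Qs s' a' - Φ s') := by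
      rw [sup'_sub_const]; ring
    rw [key]
    apply abs_sup'_sub_le
    intro a'
    have : Qs' s' a' - (Qs s' a' - Φ s') = Qs' s' a' - Qs s' a' + Φ s' := by ring
    rw [this]
    exact Finset.le_sup' (fun p : S × A => |Qs' p.1 p.2 - Qs p.1 p.2 + Φ p.1|)
      (Finset.mem_univ (s', a'))
  have hQeq : ∀ s a, Q' s a = Q s a - Φ s := by
    intro s a; have := hDzero s a; linarith
  have hQseq : ∀ s a, Qs' s a = Qs s a - Φ s := by
    intro s a; have := hEzero s a; linarith
  refine ⟨hQeq, fun s => ?_⟩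
  ext a
  simp only [Set.mem_setOf_eq, hQseq, sub_le_sub_iff_right]
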